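/- Let n ≥ 3 be an integer and set σ = 40n³. Let u, v, w be three pairwise distinct points of ℝ² all of whose coordinates are integers in {0, 1, …, n−1}, and assume w does not lie on the segment [u, v]. Then every point x ∈ ℝ² with ‖x − σ·w‖_∞ ≤ 10n² + 2 is at Euclidean distance strictly greater than 2 from the segment [σ·u, σ·v]; that is, the box of radius 10n² + 2 centered on σ·w does not intersect the margin at distance 2 of the scaled segment [σ·u, σ·v]. -/

import Mathlib

/-!
Write `a = w - u` and `b = v - u`: lattice vectors with `a ∉ [0, b]`. For a point `t • b` of
`[0, b]`, the cross product `a × b = (a - t • b) × b` is an integer, so either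
`1 ≤ |a × b| ≤ ‖a - t • b‖ ‖b‖`, or `a = s • b` with `s ∉ [0, 1]`, and then `a - t • b` is at
least as long as one of the nonzero lattice vectors `a`, `a - b`. Hence `w` is at distance at
least `1 / max 1 ‖v - u‖ ≥ 1 / (2n)` from `[u, v]`, so `σ • w` is at distance at least `20 n²`
from `[σ • u, σ • v]`, while the box has Euclidean radius `√2 (10 n² + 2) ≤ 15 n²`.
-/

open Metric Set

def IsLatticePoint {ι : Type*} (p : EuclideanSpace ℝ ι) : Prop :=
  ∀ i, ∃ k : ℤ, p i = k

namespace IsLatticePoint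

variable {ι : Type*} {p q : EuclideanSpace ℝ ι}

theorem of_nat_coords {n : ℕ} (hp : ∀ i, ∃ k : ℕ, k < n ∧ p i = k) : IsLatticePoint p :=
  fun i ↦ let ⟨k, _, hk⟩ := hp i; ⟨k, by rw [hk, Int.cast_natCast]⟩

theorem sub (hp : IsLatticePoint p) (hq : IsLatticePoint q) : IsLatticePoint (p - q) := by
  intro i
  obtain ⟨k, hk⟩ := hp i
  obtain ⟨l, hl⟩ := hq i
  exact ⟨k - l, by simp [hk, hl]⟩

theorem one_le_norm [Fintype ι] (hp : IsLatticePoint p) (h : p ≠ 0) : 1 ≤ ‖p‖ := by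
  obtain ⟨i, hi⟩ : ∃ i, p i ≠ 0 := by
    by_contra! hzero
    exact h (by ext i; simpa using hzero i)
  obtain ⟨k, hk⟩ := hp i
  have hk0 : k ≠ 0 := by rintro rfl; simp [hk] at hi
  calc (1 : ℝ) ≤ |(k : ℝ)| := by exact_mod_cast Int.one_le_abs hk0
    _ = ‖p i‖ := by rw [hk, Real.norm_eq_abs]
    _ ≤ ‖p‖ := PiLp.norm_apply_le p i

end IsLatticePoint

section Cross

variable {p q : EuclideanSpace ℝ (Fin 2)}

def cross (p q : EuclideanSpace ℝ (Fin 2)) : ℝ := p 0 * q 1 - p 1 * q 0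

theorem norm_sq_eq_sq_add_sq (p : EuclideanSpace ℝ (Fin 2)) : ‖p‖ ^ 2 = p 0 ^ 2 + p 1 ^ 2 := by
  simp [EuclideanSpace.norm_sq_eq, Fin.sum_univ_two]

theorem abs_cross_le (p q : EuclideanSpace ℝ (Fin 2)) : |cross p q| ≤ ‖p‖ * ‖q‖ := by
  refine abs_le_of_sq_le_sq ?_ (by positivity)
  rw [mul_pow, norm_sq_eq_sq_add_sq, norm_sq_eq_sq_add_sq, cross]
  nlinarith [sq_nonneg (p 0 * q 0 + p 1 * q 1)]

theorem cross_sub_smul_left (p q : EuclideanSpace ℝ (Fin 2)) (t : ℝ) :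
    cross (p - t • q) q = cross p q := by
  simp only [cross, PiLp.sub_apply, PiLp.smul_apply, smul_eq_mul]
  ring

theorem IsLatticePoint.one_le_abs_cross (hp : IsLatticePoint p) (hq : IsLatticePoint q)
    (h : cross p q ≠ 0) : 1 ≤ |cross p q| := by
  obtain ⟨a, ha⟩ := hp 0
  obtain ⟨b, hb⟩ := hp 1
  obtain ⟨c, hc⟩ := hq 0
  obtain ⟨d, hd⟩ := hq 1
  have hcast : cross p q = ((a * d - b * c : ℤ) : ℝ) := by
    rw [cross, ha, hb, hc, hd]; push_cast; ring
  rw [hcast] at h ⊢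
  exact_mod_cast Int.one_le_abs (by exact_mod_cast h)

theorem exists_eq_smul_of_cross_eq_zero (hq : q ≠ 0) (h : cross p q = 0) :
    ∃ s : ℝ, p = s • q := by
  rw [cross, sub_eq_zero] at h
  by_cases hq0 : q 0 = 0
  · have hq1 : q 1 ≠ 0 := fun hq1 ↦ hq (by ext i; fin_cases i <;> simpa)
    have hp0 : p 0 = 0 := by simpa [hq0, hq1] using h
    refine ⟨p 1 / q 1, ?_⟩
    ext i; fin_cases i
    · simp [hp0, hq0]
    · simp [hq1]
  · refine ⟨p 0 / q 0, ?_⟩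
    ext i; fin_cases i
    · simp [hq0]
    · simp only [Fin.mk_one, PiLp.smul_apply, smul_eq_mul]
      rw [div_mul_eq_mul_div, h, mul_div_cancel_right₀ _ hq0]

end Cross

section LatticeSeparation

variable {a b : EuclideanSpace ℝ (Fin 2)} {t : ℝ}

theorem one_le_norm_sub_smul_of_cross_eq_zero (ha : IsLatticePoint a) (hb : IsLatticePoint b)
    (hab : ∀ s ∈ Icc (0 : ℝ) 1, a ≠ s • b) (hc : cross a b = 0) (ht : t ∈ Icc (0 : ℝ) 1) :
    1 ≤ ‖a - t • b‖ := by
  have ha0 : a ≠ 0 := by simpa using hab 0 (by simp)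
  by_cases hb0 : b = 0
  · simpa [hb0] using ha.one_le_norm ha0
  obtain ⟨s, rfl⟩ := exists_eq_smul_of_cross_eq_zero hb0 hc
  have hs : s < 0 ∨ 1 < s := by
    by_contra! hs
    exact hab s hs rfl
  rw [← sub_smul, norm_smul, Real.norm_eq_abs]
  rcases hs with hs | hs
  · have habs : |s| ≤ |s - t| := by
      rw [abs_of_neg hs, abs_of_neg (by linarith [ht.1])]; linarith [ht.1]
    calc 1 ≤ ‖s • b‖ := ha.one_le_norm ha0
      _ = |s| * ‖b‖ := by rw [norm_smul, Real.norm_eq_abs]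
      _ ≤ |s - t| * ‖b‖ := mul_le_mul_of_nonneg_right habs (norm_nonneg _)
  · have habs : |s - 1| ≤ |s - t| := by
      rw [abs_of_pos (by linarith), abs_of_pos (by linarith [ht.2])]; linarith [ht.2]
    have hv : s • b - b ≠ 0 := by simpa [sub_eq_zero] using hab 1 (by simp)
    calc 1 ≤ ‖s • b - b‖ := (ha.sub hb).one_le_norm hv
      _ = |s - 1| * ‖b‖ := by rw [← Real.norm_eq_abs, ← norm_smul, sub_smul, one_smul]
      _ ≤ |s - t| * ‖b‖ := mul_le_mul_of_nonneg_right habs (norm_nonneg _)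

theorem one_le_norm_sub_smul_mul_max (ha : IsLatticePoint a) (hb : IsLatticePoint b)
    (hab : ∀ s ∈ Icc (0 : ℝ) 1, a ≠ s • b) (ht : t ∈ Icc (0 : ℝ) 1) :
    1 ≤ ‖a - t • b‖ * max 1 ‖b‖ := by
  by_cases hc : cross a b = 0
  · exact (one_le_norm_sub_smul_of_cross_eq_zero ha hb hab hc ht).trans
      (le_mul_of_one_le_right (norm_nonneg _) (le_max_left _ _))
  · calc 1 ≤ |cross a b| := ha.one_le_abs_cross hb hc
      _ = |cross (a - t • b) b| := by rw [cross_sub_smul_left]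
      _ ≤ ‖a - t • b‖ * ‖b‖ := abs_cross_le _ _
      _ ≤ ‖a - t • b‖ * max 1 ‖b‖ := by gcongr; exact le_max_right _ _

theorem one_le_dist_mul_max_of_notMem_segment {u v w y : EuclideanSpace ℝ (Fin 2)}
    (hu : IsLatticePoint u) (hv : IsLatticePoint v) (hw : IsLatticePoint w)
    (hseg : w ∉ segment ℝ u v) (hy : y ∈ segment ℝ u v) : 1 ≤ dist w y * max 1 ‖v - u‖ := by
  rw [segment_eq_image'] at hseg hy
  obtain ⟨t, ht, rfl⟩ := hy
  have hoff : ∀ s ∈ Icc (0 : ℝ) 1, w - u ≠ s • (v - u) :=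
    fun s hs h ↦ hseg ⟨s, hs, show u + s • (v - u) = w by rw [← h, add_sub_cancel]⟩
  rw [dist_eq_norm, sub_add_eq_sub_sub]
  exact one_le_norm_sub_smul_mul_max (hw.sub hu) (hv.sub hu) hoff ht

end LatticeSeparation

theorem segment_smul_eq_image {𝕜 E : Type*} [CommRing 𝕜] [PartialOrder 𝕜] [AddRightMono 𝕜]
    [AddCommGroup E] [Module 𝕜 E] (σ : 𝕜) (u v : E) :
    segment 𝕜 (σ • u) (σ • v) = (σ • ·) '' segment 𝕜 u v :=
  (image_segment 𝕜 (LinearMap.lsmul 𝕜 E σ).toAffineMap u v).symm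

theorem norm_sq_le_of_max_abs_le {p : EuclideanSpace ℝ (Fin 2)} {r : ℝ}
    (h : max |p 0| |p 1| ≤ r) : ‖p‖ ^ 2 ≤ 2 * r ^ 2 := by
  rw [norm_sq_eq_sq_add_sq, ← sq_abs (p 0), ← sq_abs (p 1)]
  have h0 := (le_max_left _ _).trans h
  have h1 := (le_max_right _ _).trans h
  nlinarith [abs_nonneg (p 0), abs_nonneg (p 1)]

theorem norm_sub_le_of_nat_coords {n : ℕ} {u v : EuclideanSpace ℝ (Fin 2)}
    (hu : ∀ i, ∃ k : ℕ, k < n ∧ u i = k) (hv : ∀ i, ∃ k : ℕ, k < n ∧ v i = k) :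
    ‖v - u‖ ≤ 2 * n := by
  have hcoord : ∀ i, |(v - u) i| ≤ n := by
    intro i
    obtain ⟨k, hk, hki⟩ := hu i
    obtain ⟨l, hl, hli⟩ := hv i
    rw [PiLp.sub_apply, hki, hli, abs_le]
    have hk' : (k : ℝ) < n := by exact_mod_cast hk
    have hl' : (l : ℝ) < n := by exact_mod_cast hl
    constructor <;> linarith [k.cast_nonneg (α := ℝ), l.cast_nonneg (α := ℝ)]
  have hsq := norm_sq_le_of_max_abs_le (max_le (hcoord 0) (hcoord 1))
  refine le_of_sq_le_sq ?_ (by positivity)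
  nlinarith

theorem stmt8_general (n : ℕ) (hn : 3 ≤ n) (u v w : EuclideanSpace ℝ (Fin 2))
    (hu : ∀ i, ∃ k : ℕ, k < n ∧ u i = k)
    (hv : ∀ i, ∃ k : ℕ, k < n ∧ v i = k)
    (hw : ∀ i, ∃ k : ℕ, k < n ∧ w i = k)
    (hseg : w ∉ segment ℝ u v)
    (x : EuclideanSpace ℝ (Fin 2))
    (hx : max |x 0 - ((40 * (n : ℝ) ^ 3) • w) 0| |x 1 - ((40 * (n : ℝ) ^ 3) • w) 1|
      ≤ 10 * (n : ℝ) ^ 2 + 2) :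
    2 < Metric.infDist x
      (segment ℝ ((40 * (n : ℝ) ^ 3) • u) ((40 * (n : ℝ) ^ 3) • v)) := by
  have hn' : (3 : ℝ) ≤ n := by exact_mod_cast hn
  have hn2 : (9 : ℝ) ≤ n ^ 2 := by nlinarith
  set σ : ℝ := 40 * (n : ℝ) ^ 3
  have hbox : dist x (σ • w) ≤ 15 * n ^ 2 := by
    have hsq := norm_sq_le_of_max_abs_le (p := x - σ • w) (by simpa using hx)
    rw [dist_eq_norm]
    refine le_of_sq_le_sq ?_ (by positivity)
    nlinarith
  have hM : max 1 ‖v - u‖ ≤ 2 * n := max_le (by linarith) (norm_sub_le_of_nat_coords hu hv)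
  rw [segment_smul_eq_image]
  refine lt_of_lt_of_le (b := 5 * (n : ℝ) ^ 2) (by nlinarith) <|
    (le_infDist (Set.Nonempty.image _ ⟨u, left_mem_segment ℝ u v⟩)).2 ?_
  rintro _ ⟨y, hy, rfl⟩
  have hsep := one_le_dist_mul_max_of_notMem_segment (.of_nat_coords hu) (.of_nat_coords hv)
    (.of_nat_coords hw) hseg hy
  have hfar : 20 * n ^ 2 ≤ dist (σ • w) (σ • y) := by
    rw [dist_smul₀, Real.norm_of_nonneg (by positivity)]
    calc 20 * (n : ℝ) ^ 2 ≤ 20 * n ^ 2 * (dist w y * max 1 ‖v - u‖) :=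
          le_mul_of_one_le_right (by positivity) hsep
      _ ≤ 20 * n ^ 2 * (dist w y * (2 * n)) := by gcongr
      _ = σ * dist w y := by ring
  linarith [dist_triangle_left (σ • w) (σ • y) x]

/-- Claim (iii) of Section 5 of the paper: the box of radius `10n² + 2`
(for the sup norm) centered on `σ·w` (with `σ = 40n³`) does not intersect the
margin at distance 2 of the scaled segment `[σ·u, σ·v]`, provided `w` is not
on the segment `[u, v]`. -/
theorem stmt8 (n : ℕ) (hn : 3 ≤ n) (u v w : EuclideanSpace ℝ (Fin 2))
    (hu : ∀ i, ∃ k : ℕ, k < n ∧ u i = k)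
    (hv : ∀ i, ∃ k : ℕ, k < n ∧ v i = k)
    (hw : ∀ i, ∃ k : ℕ, k < n ∧ w i = k)
    (huv : u ≠ v) (huw : u ≠ w) (hvw : v ≠ w)
    (hseg : w ∉ segment ℝ u v)
    (x : EuclideanSpace ℝ (Fin 2))
    (hx : max |x 0 - ((40 * (n : ℝ) ^ 3) • w) 0| |x 1 - ((40 * (n : ℝ) ^ 3) • w) 1|
      ≤ 10 * (n : ℝ) ^ 2 + 2) :
    2 < Metric.infDist x
      (segment ℝ ((40 * (n : ℝ) ^ 3) • u) ((40 * (n : ℝ) ^ 3) • v)) :=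
  stmt8_general n hn u v w hu hv hw hseg x hx
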